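/- (Lower bound on the Gaussian measure of a cone neighborhood) Let $Y \sim N(0, A)$ on $\mathbb{R}^d$ with $A$ positive definite, let $s \in \mathbb{R}^d$, and $\varepsilon > 0$. Then $P(Y \geq s,\; (Y-s)^T A^{-1}(Y-s) \leq \varepsilon^2) \geq (2\pi)^{-d/2}|A|^{-1/2} e^{-\varepsilon^2/2} e^{-s^T A^{-1} s / 2} \prod_{i=1}^d \frac{1 - e^{-(s^T A^{-1} e_i)\tilde\varepsilon}}{s^T A^{-1} e_i}$, where $\tilde\varepsilon = \varepsilon \min\{\|u\|_\infty : u^T A^{-1} u = 1\}$ and $e_i$ are standard basis vectors, assuming $s^T A^{-1} e_i > 0$ for all $i$ (with the convention that the factor is $\tilde\varepsilon$ when $s^T A^{-1} e_i = 0$). -/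

import Mathlib

open MeasureTheory Matrix

/-- The density of `N(m, A)` on `ℝ^d` (with respect to Lebesgue measure). -/
noncomputable def gaussDensity {d : ℕ} (m : Fin d → ℝ) (A : Matrix (Fin d) (Fin d) ℝ)
    (x : Fin d → ℝ) : ℝ :=
  (2 * Real.pi) ^ (-(d : ℝ) / 2) * A.det ^ (-(1 : ℝ) / 2) *
    Real.exp (-(1 / 2) * ((x - m) ⬝ᵥ (A⁻¹ *ᵥ (x - m))))

/-!
On the cone neighbourhood, expanding `yᵀA⁻¹y` around `s` and bounding the quadratic remainder by
`ε²` gives `e^{-yᵀA⁻¹y/2} ≥ e^{-ε²/2} e^{-sᵀA⁻¹s/2} ∏ᵢ e^{-(sᵀA⁻¹eᵢ)(yᵢ - sᵢ)}`. The box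
`∏ᵢ [sᵢ, sᵢ + ε̃]` lies in the neighbourhood, because `‖v‖_∞ ≤ ε̃` forces `vᵀA⁻¹v ≤ ε²` by
rescaling `v` onto the quadric `uᵀA⁻¹u = 1`; on the box the lower bound factorises into
one-dimensional exponential integrals. The neighbourhood is compact since `A⁻¹` is coercive, so
the density is integrable on it.
-/

section QuadraticForm

variable {n : Type*} [Fintype n] {B : Matrix n n ℝ}

theorem continuous_dotProduct_mulVec_self (B : Matrix n n ℝ) :
    Continuous fun v : n → ℝ => v ⬝ᵥ (B *ᵥ v) := by
  simp only [dotProduct, mulVec]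
  fun_prop

theorem Matrix.IsSymm.dotProduct_mulVec_comm (hB : B.IsSymm) (v w : n → ℝ) :
    v ⬝ᵥ (B *ᵥ w) = w ⬝ᵥ (B *ᵥ v) := by
  rw [dotProduct_mulVec, ← mulVec_transpose, hB.eq, dotProduct_comm]

theorem Matrix.IsSymm.dotProduct_mulVec_add_self (hB : B.IsSymm) (s v : n → ℝ) :
    (s + v) ⬝ᵥ (B *ᵥ (s + v)) = s ⬝ᵥ (B *ᵥ s) + 2 * (s ⬝ᵥ (B *ᵥ v)) + v ⬝ᵥ (B *ᵥ v) := by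
  rw [mulVec_add, dotProduct_add, add_dotProduct, add_dotProduct,
    hB.dotProduct_mulVec_comm v s]
  ring

theorem dotProduct_mulVec_eq_sum_single [DecidableEq n] (B : Matrix n n ℝ) (s v : n → ℝ) :
    s ⬝ᵥ (B *ᵥ v) = ∑ i, s ⬝ᵥ (B *ᵥ Pi.single i 1) * v i := by
  simp only [dotProduct_mulVec, dotProduct_single, mul_one]
  rfl

theorem Matrix.PosDef.exists_pos_mul_norm_sq_le (hB : B.PosDef) :
    ∃ c > 0, ∀ v : n → ℝ, c * ‖v‖ ^ 2 ≤ v ⬝ᵥ (B *ᵥ v) := by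
  obtain ⟨c, hc, hcle⟩ := (isCompact_sphere (0 : n → ℝ) 1).exists_forall_le'
    (continuous_dotProduct_mulVec_self B).continuousOn (a := 0) fun u hu =>
      hB.dotProduct_mulVec_pos (ne_zero_of_mem_unit_sphere ⟨u, hu⟩)
  refine ⟨c, hc, fun v => ?_⟩
  rcases eq_or_ne v 0 with rfl | hv
  · simp
  have hnv : 0 < ‖v‖ := norm_pos_iff.mpr hv
  have hu := hcle (‖v‖⁻¹ • v) (by simp [norm_smul, hnv.ne'])
  rw [mulVec_smul, dotProduct_smul, smul_dotProduct, smul_eq_mul, smul_eq_mul] at hu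
  calc c * ‖v‖ ^ 2 ≤ ‖v‖⁻¹ * (‖v‖⁻¹ * v ⬝ᵥ (B *ᵥ v)) * ‖v‖ ^ 2 := by gcongr
    _ = v ⬝ᵥ (B *ᵥ v) := by field_simp

theorem Matrix.PosDef.isBounded_setOf_dotProduct_mulVec_sub_le (hB : B.PosDef)
    (s : n → ℝ) (r : ℝ) :
    Bornology.IsBounded {y : n → ℝ | (y - s) ⬝ᵥ (B *ᵥ (y - s)) ≤ r} := by
  obtain ⟨c, hc, hcle⟩ := hB.exists_pos_mul_norm_sq_le
  refine (Metric.isBounded_closedBall (x := s) (r := √(r / c))).subset fun y hy => ?_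
  rw [Metric.mem_closedBall, dist_eq_norm, ← abs_norm]
  refine Real.abs_le_sqrt ?_
  rw [le_div_iff₀ hc, mul_comm]
  exact (hcle _).trans hy

/-- The `ε̃ / ε` of the paper: the smallest sup-norm of a point on the quadric `uᵀBu = 1`. -/
noncomputable def quadricInfNorm (B : Matrix n n ℝ) : ℝ :=
  sInf {r : ℝ | ∃ u : n → ℝ, u ⬝ᵥ (B *ᵥ u) = 1 ∧ r = ‖u‖}

theorem quadricInfNorm_nonneg (B : Matrix n n ℝ) : 0 ≤ quadricInfNorm B :=
  Real.sInf_nonneg fun _ ⟨u, _, hr⟩ => hr ▸ norm_nonneg u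

theorem dotProduct_mulVec_le_sq_of_norm_le_mul_quadricInfNorm (B : Matrix n n ℝ)
    {v : n → ℝ} {ε : ℝ} (hv : ‖v‖ ≤ ε * quadricInfNorm B) : v ⬝ᵥ (B *ᵥ v) ≤ ε ^ 2 := by
  set q := v ⬝ᵥ (B *ᵥ v)
  rcases le_or_gt q 0 with hq | hq
  · exact hq.trans (sq_nonneg ε)
  have hsq : 0 < √q := Real.sqrt_pos.mpr hq
  -- `v / √q` lies on the quadric, so `‖v‖ / √q` bounds the infimum from above.
  have hu : ((√q)⁻¹ • v) ⬝ᵥ (B *ᵥ ((√q)⁻¹ • v)) = 1 := by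
    rw [mulVec_smul, dotProduct_smul, smul_dotProduct, smul_eq_mul, smul_eq_mul, ← mul_assoc,
      ← mul_inv, Real.mul_self_sqrt hq.le, inv_mul_cancel₀ hq.ne']
  have hle : quadricInfNorm B * √q ≤ ‖v‖ := by
    have : quadricInfNorm B ≤ ‖(√q)⁻¹ • v‖ :=
      csInf_le ⟨0, fun _ ⟨u, _, hr⟩ => hr ▸ norm_nonneg u⟩ ⟨_, hu, rfl⟩
    rw [norm_smul, Real.norm_eq_abs, abs_inv, abs_of_pos hsq] at this
    rwa [← le_div_iff₀ hsq, div_eq_inv_mul]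
  have hpos : 0 < quadricInfNorm B := by
    refine (quadricInfNorm_nonneg B).lt_of_ne fun h => hq.ne' ?_
    have : v = 0 := norm_le_zero_iff.mp (by simpa [← h] using hv)
    simp [q, this]
  have hsqε : √q ≤ ε := le_of_mul_le_mul_left (by linarith) hpos
  calc q = √q ^ 2 := (Real.sq_sqrt hq.le).symm
    _ ≤ ε ^ 2 := pow_le_pow_left₀ hsq.le hsqε 2

end QuadraticForm

section ConeNeighborhood

variable {n : Type*} [Fintype n]

def coneNbhd (B : Matrix n n ℝ) (s : n → ℝ) (ε : ℝ) : Set (n → ℝ) :=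
  {y | s ≤ y ∧ (y - s) ⬝ᵥ (B *ᵥ (y - s)) ≤ ε ^ 2}

theorem isCompact_coneNbhd {B : Matrix n n ℝ} (hB : B.PosDef) (s : n → ℝ) (ε : ℝ) :
    IsCompact (coneNbhd B s ε) := by
  refine Metric.isCompact_of_isClosed_isBounded ?_
    ((hB.isBounded_setOf_dotProduct_mulVec_sub_le s (ε ^ 2)).subset fun _ hy => hy.2)
  refine (isClosed_Ici (a := s)).inter (isClosed_le (g := fun _ => ε ^ 2) ?_ continuous_const)
  exact (continuous_dotProduct_mulVec_self B).comp (continuous_id.sub continuous_const)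

theorem pi_Icc_subset_coneNbhd (B : Matrix n n ℝ) (s : n → ℝ) {ε : ℝ} (hε : 0 ≤ ε) :
    Set.univ.pi (fun i => Set.Icc (s i) (s i + ε * quadricInfNorm B)) ⊆ coneNbhd B s ε := by
  intro y hy
  rw [Set.mem_univ_pi] at hy
  refine ⟨fun i => (hy i).1, dotProduct_mulVec_le_sq_of_norm_le_mul_quadricInfNorm B ?_⟩
  refine (pi_norm_le_iff_of_nonneg (mul_nonneg hε (quadricInfNorm_nonneg B))).mpr fun i => ?_
  rw [Pi.sub_apply, Real.norm_eq_abs, abs_le]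
  constructor <;> linarith [(hy i).1, (hy i).2]

theorem exp_mul_prod_exp_le_of_mem_coneNbhd [DecidableEq n] {B : Matrix n n ℝ} (hB : B.IsSymm)
    {s y : n → ℝ} {ε : ℝ} (hy : y ∈ coneNbhd B s ε) :
    Real.exp (-(ε ^ 2) / 2) * Real.exp (-(s ⬝ᵥ (B *ᵥ s)) / 2) *
        ∏ i, Real.exp (-(s ⬝ᵥ (B *ᵥ Pi.single i 1)) * (y i - s i)) ≤
      Real.exp (-(1 / 2) * (y ⬝ᵥ (B *ᵥ y))) := by
  have hlin : ∑ i, -(s ⬝ᵥ (B *ᵥ Pi.single i 1)) * (y i - s i) = -(s ⬝ᵥ (B *ᵥ (y - s))) := by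
    simp only [dotProduct_mulVec_eq_sum_single B s (y - s), Pi.sub_apply, neg_mul,
      Finset.sum_neg_distrib]
  have hexpand := hB.dotProduct_mulVec_add_self s (y - s)
  rw [add_sub_cancel] at hexpand
  rw [← Real.exp_sum, hlin, ← Real.exp_add, ← Real.exp_add, Real.exp_le_exp, hexpand]
  linarith [hy.2]

end ConeNeighborhood

theorem integral_exp_neg_mul_sub_Icc (a L c : ℝ) (hL : 0 ≤ L) (hc : c ≠ 0) :
    ∫ t in Set.Icc a (a + L), Real.exp (-c * (t - a)) = (1 - Real.exp (-c * L)) / c := by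
  rw [integral_Icc_eq_integral_Ioc, ← intervalIntegral.integral_of_le (by linarith),
    intervalIntegral.integral_comp_sub_right (fun t => Real.exp (-c * t)),
    intervalIntegral.integral_comp_mul_left _ (neg_ne_zero.mpr hc), integral_exp]
  simp only [sub_self, add_sub_cancel_left, mul_zero, Real.exp_zero, smul_eq_mul]
  field_simp
  ring

theorem setIntegral_univ_pi_prod {ι : Type*} [Fintype ι] (S : ι → Set ℝ) (f : ι → ℝ → ℝ) :
    ∫ y in Set.univ.pi S, ∏ i, f i (y i) = ∏ i, ∫ t in S i, f i t := by
  rw [volume_pi, Measure.restrict_pi_pi, integral_fintype_prod_eq_prod]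

theorem setIntegral_pi_Icc_prod_exp {ι : Type*} [Fintype ι] (s c : ι → ℝ) {L : ℝ} (hL : 0 ≤ L)
    (hc : ∀ i, c i ≠ 0) :
    ∫ y in Set.univ.pi (fun i => Set.Icc (s i) (s i + L)), ∏ i, Real.exp (-c i * (y i - s i)) =
      ∏ i, (1 - Real.exp (-c i * L)) / c i := by
  rw [setIntegral_univ_pi_prod _ fun i t => Real.exp (-c i * (t - s i))]
  exact Finset.prod_congr rfl fun i _ => integral_exp_neg_mul_sub_Icc (s i) L (c i) hL (hc i)

theorem continuous_gaussDensity {d : ℕ} (m : Fin d → ℝ) (A : Matrix (Fin d) (Fin d) ℝ) :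
    Continuous (gaussDensity m A) :=
  continuous_const.mul <| Real.continuous_exp.comp <| continuous_const.mul <|
    (continuous_dotProduct_mulVec_self A⁻¹).comp (continuous_id.sub continuous_const)


theorem gaussDensity_nonneg {d : ℕ} {A : Matrix (Fin d) (Fin d) ℝ} (hA : A.PosDef)
    (m y : Fin d → ℝ) : 0 ≤ gaussDensity m A y := by
  have := hA.det_pos
  unfold gaussDensity
  positivity

theorem mul_exp_mul_prod_exp_le_gaussDensity {d : ℕ} {A : Matrix (Fin d) (Fin d) ℝ}
    (hA : A.PosDef) {s y : Fin d → ℝ} {ε : ℝ} (hy : y ∈ coneNbhd A⁻¹ s ε) :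
    (2 * Real.pi) ^ (-(d : ℝ) / 2) * A.det ^ (-(1 : ℝ) / 2) *
        Real.exp (-(ε ^ 2) / 2) * Real.exp (-(s ⬝ᵥ (A⁻¹ *ᵥ s)) / 2) *
        ∏ i, Real.exp (-(s ⬝ᵥ (A⁻¹ *ᵥ Pi.single i 1)) * (y i - s i)) ≤
      gaussDensity 0 A y := by
  have hnorm : 0 ≤ (2 * Real.pi) ^ (-(d : ℝ) / 2) * A.det ^ (-(1 : ℝ) / 2) := by
    have := hA.det_pos
    positivity
  rw [gaussDensity, sub_zero, mul_assoc, mul_assoc]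
  refine mul_le_mul_of_nonneg_left ?_ hnorm
  rw [← mul_assoc]
  exact exp_mul_prod_exp_le_of_mem_coneNbhd (isHermitian_iff_isSymm.mp hA.inv.isHermitian) hy

/-- Lower bound on the `N(0,A)`-measure of the cone neighborhood
`{y : y ≥ s, (y-s)ᵀA⁻¹(y-s) ≤ ε²}`, assuming `sᵀA⁻¹eᵢ > 0` for all `i`, where
`ε̃ = ε · min{‖u‖_∞ : uᵀA⁻¹u = 1}` and the `eᵢ` are standard basis vectors. -/
theorem stmt14 {d : ℕ} (A : Matrix (Fin d) (Fin d) ℝ) (hpd : A.PosDef)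
    (s : Fin d → ℝ) (ε : ℝ) (hε : 0 < ε)
    (hpos : ∀ i : Fin d, 0 < s ⬝ᵥ (A⁻¹ *ᵥ (Pi.single i 1))) :
    (2 * Real.pi) ^ (-(d : ℝ) / 2) * A.det ^ (-(1 : ℝ) / 2) *
        Real.exp (-(ε ^ 2) / 2) * Real.exp (-(s ⬝ᵥ (A⁻¹ *ᵥ s)) / 2) *
        ∏ i : Fin d,
          (1 - Real.exp (-(s ⬝ᵥ (A⁻¹ *ᵥ (Pi.single i 1))) *
              (ε * sInf {r : ℝ | ∃ u : Fin d → ℝ, u ⬝ᵥ (A⁻¹ *ᵥ u) = 1 ∧ r = ‖u‖}))) /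
            (s ⬝ᵥ (A⁻¹ *ᵥ (Pi.single i 1))) ≤
      ∫ y in {y : Fin d → ℝ | s ≤ y ∧ (y - s) ⬝ᵥ (A⁻¹ *ᵥ (y - s)) ≤ ε ^ 2},
        gaussDensity 0 A y := by
  set box := Set.univ.pi fun i => Set.Icc (s i) (s i + ε * quadricInfNorm A⁻¹)
  have hbox : box ⊆ coneNbhd A⁻¹ s ε := pi_Icc_subset_coneNbhd A⁻¹ s hε.le
  have hint : IntegrableOn (gaussDensity 0 A) (coneNbhd A⁻¹ s ε) :=
    (continuous_gaussDensity 0 A).continuousOn.integrableOn_compact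
      (isCompact_coneNbhd hpd.inv s ε)
  have hbox_compact : IsCompact box := isCompact_univ_pi fun _ => isCompact_Icc
  calc _ = ∫ y in box, (2 * Real.pi) ^ (-(d : ℝ) / 2) * A.det ^ (-(1 : ℝ) / 2) *
          Real.exp (-(ε ^ 2) / 2) * Real.exp (-(s ⬝ᵥ (A⁻¹ *ᵥ s)) / 2) *
          ∏ i, Real.exp (-(s ⬝ᵥ (A⁻¹ *ᵥ Pi.single i 1)) * (y i - s i)) := by
        rw [integral_const_mul, setIntegral_pi_Icc_prod_exp s _
          (mul_nonneg hε.le (quadricInfNorm_nonneg _)) fun i => (hpos i).ne']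
        rfl
    _ ≤ ∫ y in box, gaussDensity 0 A y :=
        setIntegral_mono_on ((by fun_prop : Continuous _).continuousOn.integrableOn_compact
            hbox_compact)
          (hint.mono_set hbox) hbox_compact.measurableSet
          fun y hy => mul_exp_mul_prod_exp_le_gaussDensity hpd (hbox hy)
    _ ≤ ∫ y in coneNbhd A⁻¹ s ε, gaussDensity 0 A y :=
        setIntegral_mono_set hint (.of_forall fun y => gaussDensity_nonneg hpd 0 y)
          hbox.eventuallyLE
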